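/- arXiv:1612.03339 — 10 statements merged into one kernel-verified Lean document; each statement's English description precedes it below -/
import Mathlib

section
/- Let d : 𝒥 → 𝒯 be a due-date assignment. The following are equivalent: (i) for every t ∈ 𝒯, ∑_{j ∈ 𝒥 : d_j ≥ t} p_j ≥ T − t + 1; (ii) there is a permutation π of 𝒥 such that, when the jobs are processed consecutively without idle time starting at time 0 in the order π, every job j completes by time d_j. Moreover, if (i) holds, then any permutation ordering the jobs by nondecreasing due dates (Earliest Due Date order) completes every job by its due date. -/
open Finset

lemma edd_aux {n : ℕ} (p : Fin n → ℕ)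
    (T : ℕ) (hT : T = ∑ j, p j)
    (d : Fin n → ℕ) (hd : ∀ j, d j ∈ Icc 1 T)
    (h : ∀ t ∈ Icc 1 T, T + 1 - t ≤ ∑ j ∈ univ.filter (fun j => t ≤ d j), p j)
    (π : Equiv.Perm (Fin n)) (hmono : Monotone (fun i => d (π i))) (j : Fin n) :
    ∑ k ∈ univ.filter (fun k => π.symm k ≤ π.symm j), p k ≤ d j := by
  set i := π.symm j with hi
  have hC : ∑ k ∈ univ.filter (fun k => π.symm k ≤ i), p k
      = ∑ m ∈ univ.filter (fun m => m ≤ i), p (π m) := by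
    refine Finset.sum_equiv π.symm (fun k => by simp) (fun k _ => by simp)
  have hCT : ∑ m ∈ univ.filter (fun m => m ≤ i), p (π m)
      + ∑ m ∈ univ.filter (fun m => ¬ m ≤ i), p (π m) = T := by
    rw [Finset.sum_filter_add_sum_filter_not, hT]
    exact Equiv.sum_comp π p
  have hdj : d j = d (π i) := by rw [hi]; simp
  by_cases hdT : d j = T
  · rw [hdT]
    have : ∑ k ∈ univ.filter (fun k => π.symm k ≤ i), p k ≤ T := by
      rw [hC]; omega
    exact this
  · have hdlt : d j + 1 ≤ T := by have := hd j; simp at this; omega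
    have ht := h (d j + 1) (by simp; omega)
    have hsub : univ.filter (fun k => d j + 1 ≤ d k)
        ⊆ (univ.filter (fun m => ¬ m ≤ i)).image π := by
      intro k hk
      simp only [mem_filter, mem_univ, true_and] at hk
      simp only [Finset.mem_image, mem_filter, mem_univ, true_and]
      refine ⟨π.symm k, ?_, by simp⟩
      intro hle
      have := hmono hle
      simp only [Equiv.apply_symm_apply] at this
      omega
    have hle : ∑ k ∈ univ.filter (fun k => d j + 1 ≤ d k), p k
        ≤ ∑ m ∈ univ.filter (fun m => ¬ m ≤ i), p (π m) := by
      calc ∑ k ∈ univ.filter (fun k => d j + 1 ≤ d k), p k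
          ≤ ∑ k ∈ (univ.filter (fun m => ¬ m ≤ i)).image π, p k :=
            Finset.sum_le_sum_of_subset hsub
        _ = ∑ m ∈ univ.filter (fun m => ¬ m ≤ i), p (π m) :=
            Finset.sum_image (fun a _ b _ hab => π.injective hab)
    rw [hC]
    omega

/-- Let `d : 𝒥 → 𝒯` be a due-date assignment.  The following are
equivalent: (i) for every `t ∈ 𝒯`, `∑_{j : d j ≥ t} p j ≥ T − t + 1`;
(ii) there is a permutation `π` of the jobs (position `i` processes job `π i`,
consecutively without idle time from time 0, so job `j` completes at
`∑_{k : position of k ≤ position of j} p k`) under which every job `j` completes by `d j`.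
Moreover, if (i) holds, then any permutation ordering the jobs by nondecreasing due dates
(EDD order) completes every job by its due date. -/
theorem stmt_0 {n : ℕ} (p : Fin n → ℕ) (hp : ∀ j, 0 < p j)
    (T : ℕ) (hT : T = ∑ j, p j)
    (d : Fin n → ℕ) (hd : ∀ j, d j ∈ Icc 1 T) :
    ((∀ t ∈ Icc 1 T, T + 1 - t ≤ ∑ j ∈ univ.filter (fun j => t ≤ d j), p j) ↔
      (∃ π : Equiv.Perm (Fin n), ∀ j,
        ∑ k ∈ univ.filter (fun k => π.symm k ≤ π.symm j), p k ≤ d j)) ∧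
    ((∀ t ∈ Icc 1 T, T + 1 - t ≤ ∑ j ∈ univ.filter (fun j => t ≤ d j), p j) →
      ∀ π : Equiv.Perm (Fin n), Monotone (fun i => d (π i)) →
        ∀ j, ∑ k ∈ univ.filter (fun k => π.symm k ≤ π.symm j), p k ≤ d j) := by
  constructor
  · constructor
    · intro h
      exact ⟨Tuple.sort d, edd_aux p T hT d hd h _ (Tuple.monotone_sort d)⟩
    · rintro ⟨π, hπ⟩ t ht
      simp only [mem_Icc] at ht
      have hsplit : (∑ j ∈ univ.filter (fun j => d j < t), p j)
          + ∑ j ∈ univ.filter (fun j => t ≤ d j), p j = T := by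
        rw [hT, ← Finset.sum_filter_add_sum_filter_not univ (fun j => t ≤ d j)]
        rw [Nat.add_comm]
        congr 1
        apply Finset.sum_congr _ (fun _ _ => rfl)
        apply Finset.filter_congr
        intro x _
        simp only [not_le, eq_iff_iff]
      have hS : (∑ j ∈ univ.filter (fun j => d j < t), p j) ≤ t - 1 := by
        rcases Finset.eq_empty_or_nonempty (univ.filter (fun j => d j < t)) with he | hne
        · rw [he]; simp
        · obtain ⟨j₀, hj₀, hmax⟩ := Finset.exists_max_image _ (fun k => π.symm k) hne
          have hsub : univ.filter (fun j => d j < t)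
              ⊆ univ.filter (fun k => π.symm k ≤ π.symm j₀) := by
            intro k hk
            simp only [mem_filter, mem_univ, true_and]
            exact hmax k hk
          have := Finset.sum_le_sum_of_subset (f := p) hsub
          have hj := hπ j₀
          simp only [mem_filter, mem_univ, true_and] at hj₀
          omega
      omega
  · exact fun h π => edd_aux p T hT d hd h π
end

section
/- Let x be a feasible solution to the linear program (P). Then there is a feasible solution x̄ to (P) satisfying the assignment constraints ∑_{t ∈ 𝒯} x̄_{jt} = 1 for every job j ∈ 𝒥, whose cost ∑_{j∈𝒥} ∑_{t∈𝒯} f_j(t) x̄_{jt} is at most the cost of x. -/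
open Finset

/-- The demand `D(t) = T − t + 1` (written so that it equals `max (T − t + 1) 0`). -/
def demandD (T t : ℕ) : ℕ := T + 1 - t

/-- The residual demand `D(t, A) = max {D(t) − ∑_{j∈A} p j, 0}`. -/
def resD {n : ℕ} (p : Fin n → ℕ) (T t : ℕ) (A : Finset (Fin n)) : ℕ :=
  demandD T t - ∑ j ∈ A, p j

/-- The truncated processing time `p_j(t, A) = min {p j, D(t, A)}`. -/
def ptrunc {n : ℕ} (p : Fin n → ℕ) (T t : ℕ) (A : Finset (Fin n)) (j : Fin n) : ℕ :=
  min (p j) (resD p T t A)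

/-- Feasibility of `x` for the LP (P): `x ≥ 0` and all knapsack-cover inequalities hold. -/
def FeasP {n : ℕ} (p : Fin n → ℕ) (T : ℕ) (x : Fin n → ℕ → ℝ) : Prop :=
  (∀ j t, 0 ≤ x j t) ∧
    ∀ t ∈ Icc 1 T, ∀ A : Finset (Fin n),
      (resD p T t A : ℝ) ≤
        ∑ j ∈ univ.filter (fun j => j ∉ A), ∑ s ∈ Icc t T, (ptrunc p T t A j : ℝ) * x j s

/-- The cost `∑_{j∈𝒥} ∑_{t∈𝒯} f_j(t) x_{jt}` of an LP solution. -/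
def costP {n : ℕ} (f : Fin n → ℕ → ℝ) (T : ℕ) (x : Fin n → ℕ → ℝ) : ℝ :=
  ∑ j, ∑ t ∈ Icc 1 T, f j t * x j t

/-- Feasibility of `y` for the dual (D). -/
def FeasD {n : ℕ} (p : Fin n → ℕ) (T : ℕ) (f : Fin n → ℕ → ℝ)
    (y : ℕ → Finset (Fin n) → ℝ) : Prop :=
  (∀ t A, 0 ≤ y t A) ∧
    ∀ j : Fin n, ∀ s ∈ Icc 1 T,
      ∑ t ∈ Icc 1 s, ∑ A ∈ univ.filter (fun A : Finset (Fin n) => j ∉ A),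
        (ptrunc p T t A j : ℝ) * y t A ≤ f j s

/-- The value `∑_{t∈𝒯} ∑_{A⊆𝒥} D(t,A) y(t,A)` of a dual solution. -/
def valD {n : ℕ} (p : Fin n → ℕ) (T : ℕ) (y : ℕ → Finset (Fin n) → ℝ) : ℝ :=
  ∑ t ∈ Icc 1 T, ∑ A : Finset (Fin n), (resD p T t A : ℝ) * y t A

/-- A feasible due-date assignment `d : 𝒥 → 𝒯`: `∑_{j : d_j ≥ t} p_j ≥ D(t)` for all `t ∈ 𝒯`. -/
def FeasDue {n : ℕ} (p : Fin n → ℕ) (T : ℕ) (d : Fin n → ℕ) : Prop :=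
  (∀ j, d j ∈ Icc 1 T) ∧
    ∀ t ∈ Icc 1 T, demandD T t ≤ ∑ j ∈ univ.filter (fun j => t ≤ d j), p j

/-- Telescoping sum over an `Icc`. -/
lemma telescope_Icc (g : ℕ → ℝ) (a b : ℕ) (h : a ≤ b + 1) :
    ∑ s ∈ Icc a b, (g s - g (s + 1)) = g a - g (b + 1) := by
  induction b with
  | zero => interval_cases a <;> simp
  | succ b ih =>
    rcases Nat.lt_or_ge a (b + 2) with h' | h'
    · have ha : a ≤ b + 1 := by omega
      rw [Finset.sum_Icc_succ_top ha, ih ha]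
      ring
    · have ha : a = b + 2 := by omega
      subst ha
      rw [Finset.Icc_eq_empty (by omega)]
      simp

/-- The suffix sum `S_j(t) = ∑_{s=t}^T x_{js}`. -/
def suffixS {n : ℕ} (T : ℕ) (x : Fin n → ℕ → ℝ) (j : Fin n) (t : ℕ) : ℝ :=
  ∑ s ∈ Icc t T, x j s

/-- The truncated solution. -/
def xbar {n : ℕ} (T : ℕ) (x : Fin n → ℕ → ℝ) (j : Fin n) (s : ℕ) : ℝ :=
  if s ∈ Icc 1 T then min 1 (suffixS T x j s) - min 1 (suffixS T x j (s + 1)) else 0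

lemma suffixS_step {n : ℕ} (T : ℕ) (x : Fin n → ℕ → ℝ) (j : Fin n) (t : ℕ) (ht : t ≤ T) :
    suffixS T x j t = x j t + suffixS T x j (t + 1) := by
  unfold suffixS
  rw [show Icc t T = insert t (Icc (t + 1) T) from by
        ext k; simp only [mem_insert, mem_Icc]; omega,
      Finset.sum_insert (by simp)]

lemma suffixS_top {n : ℕ} (T : ℕ) (x : Fin n → ℕ → ℝ) (j : Fin n) :
    suffixS T x j (T + 1) = 0 := by
  unfold suffixS
  rw [Finset.Icc_eq_empty (by omega)]
  simp

lemma xbar_sum {n : ℕ} (T : ℕ) (x : Fin n → ℕ → ℝ) (j : Fin n) (t : ℕ)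
    (ht1 : 1 ≤ t) (ht2 : t ≤ T + 1) :
    ∑ s ∈ Icc t T, xbar T x j s = min 1 (suffixS T x j t) := by
  have hcong : ∀ s ∈ Icc t T,
      xbar T x j s = (fun u => min 1 (suffixS T x j u)) s
        - (fun u => min 1 (suffixS T x j u)) (s + 1) := by
    intro s hs
    simp only [xbar]
    rw [if_pos]
    simp only [mem_Icc] at hs ⊢
    omega
  rw [Finset.sum_congr rfl hcong, telescope_Icc _ _ _ ht2, suffixS_top]
  simp

/-- The key inequality: the truncated suffix sums still satisfy the knapsack-cover
inequalities. -/
lemma key_ineq {n : ℕ} (p : Fin n → ℕ) (T : ℕ) (x : Fin n → ℕ → ℝ) (hx : FeasP p T x)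
    (t : ℕ) (ht : t ∈ Icc 1 T) (A : Finset (Fin n)) :
    (resD p T t A : ℝ) ≤
      ∑ j ∈ univ.filter (fun j => j ∉ A), (ptrunc p T t A j : ℝ) * min 1 (suffixS T x j t) := by
  classical
  set B := univ.filter (fun j : Fin n => j ∉ A ∧ 1 ≤ suffixS T x j t) with hB
  have hdisj : Disjoint A B := by
    rw [Finset.disjoint_right]
    intro j hj
    simp only [hB, Finset.mem_filter, mem_univ, true_and] at hj
    exact hj.1
  have hsplit : univ.filter (fun j : Fin n => j ∉ A)
      = B ∪ univ.filter (fun j => j ∉ A ∪ B) := by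
    ext j
    simp only [hB, Finset.mem_filter, mem_univ, true_and, Finset.mem_union]
    tauto
  have hdisj2 : Disjoint B (univ.filter (fun j : Fin n => j ∉ A ∪ B)) := by
    rw [Finset.disjoint_left]
    intro j hj hj2
    simp only [Finset.mem_filter, mem_univ, true_and, Finset.mem_union] at hj2
    exact hj2 (Or.inr hj)
  have hx2 := hx.2 t ht (A ∪ B)
  have hx2' : (resD p T t (A ∪ B) : ℝ) ≤
      ∑ j ∈ univ.filter (fun j => j ∉ A ∪ B),
        (ptrunc p T t (A ∪ B) j : ℝ) * suffixS T x j t := by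
    refine hx2.trans (le_of_eq ?_)
    refine Finset.sum_congr rfl fun j _ => ?_
    simp [suffixS, Finset.mul_sum]
  have hDnat : resD p T t A ≤ (∑ j ∈ B, ptrunc p T t A j) + resD p T t (A ∪ B) := by
    by_cases hc : ∃ j ∈ B, resD p T t A ≤ p j
    · obtain ⟨j0, hj0, hle⟩ := hc
      have h1 : ptrunc p T t A j0 = resD p T t A := min_eq_right hle
      have h2 : resD p T t A ≤ ∑ j ∈ B, ptrunc p T t A j :=
        h1 ▸ Finset.single_le_sum (fun j _ => Nat.zero_le _) hj0
      omega
    · push_neg at hc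
      have h1 : ∑ j ∈ B, ptrunc p T t A j = ∑ j ∈ B, p j :=
        Finset.sum_congr rfl fun j hj => min_eq_left (hc j hj).le
      have h2 : ∑ j ∈ A ∪ B, p j = ∑ j ∈ A, p j + ∑ j ∈ B, p j :=
        Finset.sum_union hdisj
      rw [h1]
      simp only [resD]
      rw [h2]
      omega
  have hDreal : (resD p T t A : ℝ) ≤
      ∑ j ∈ B, (ptrunc p T t A j : ℝ) + (resD p T t (A ∪ B) : ℝ) := by
    exact_mod_cast hDnat
  have hBterm : ∀ j ∈ B,
      (ptrunc p T t A j : ℝ) = (ptrunc p T t A j : ℝ) * min 1 (suffixS T x j t) := by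
    intro j hj
    have h1 : (1 : ℝ) ≤ suffixS T x j t := by
      simp only [hB, Finset.mem_filter, mem_univ, true_and] at hj
      exact hj.2
    rw [min_eq_left h1, mul_one]
  have hCterm : ∀ j ∈ univ.filter (fun j : Fin n => j ∉ A ∪ B),
      (ptrunc p T t (A ∪ B) j : ℝ) * suffixS T x j t
        ≤ (ptrunc p T t A j : ℝ) * min 1 (suffixS T x j t) := by
    intro j hj
    simp only [Finset.mem_filter, mem_univ, true_and, Finset.mem_union] at hj
    push_neg at hj
    obtain ⟨hjA, hjB⟩ := hj
    have hSlt : suffixS T x j t < 1 := by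
      by_contra h
      push_neg at h
      exact hjB (by simp only [hB, Finset.mem_filter, mem_univ, true_and]; exact ⟨hjA, h⟩)
    have hS0 : 0 ≤ suffixS T x j t := Finset.sum_nonneg fun s _ => hx.1 j s
    rw [min_eq_right hSlt.le]
    have hres : resD p T t (A ∪ B) ≤ resD p T t A := by
      simp only [resD]
      have := Finset.sum_le_sum_of_subset (Finset.subset_union_left : A ⊆ A ∪ B) (f := p)
      omega
    have hpt : ptrunc p T t (A ∪ B) j ≤ ptrunc p T t A j := by
      simp only [ptrunc]
      omega
    exact mul_le_mul_of_nonneg_right (by exact_mod_cast hpt) hS0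
  calc (resD p T t A : ℝ)
      ≤ ∑ j ∈ B, (ptrunc p T t A j : ℝ) + (resD p T t (A ∪ B) : ℝ) := hDreal
    _ ≤ ∑ j ∈ B, (ptrunc p T t A j : ℝ)
        + ∑ j ∈ univ.filter (fun j => j ∉ A ∪ B),
            (ptrunc p T t (A ∪ B) j : ℝ) * suffixS T x j t := by linarith
    _ ≤ ∑ j ∈ B, (ptrunc p T t A j : ℝ) * min 1 (suffixS T x j t)
        + ∑ j ∈ univ.filter (fun j => j ∉ A ∪ B),
            (ptrunc p T t A j : ℝ) * min 1 (suffixS T x j t) :=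
        add_le_add (le_of_eq (Finset.sum_congr rfl hBterm)) (Finset.sum_le_sum hCterm)
    _ = ∑ j ∈ univ.filter (fun j => j ∉ A), (ptrunc p T t A j : ℝ) * min 1 (suffixS T x j t) := by
        rw [hsplit, Finset.sum_union hdisj2]

/-- Let `x` be a feasible solution to the linear program (P).  Then there
is a feasible solution `x̄` to (P) satisfying the assignment constraints
`∑_{t∈𝒯} x̄_{jt} = 1` for every job `j`, whose cost is at most the cost of `x`. -/
theorem stmt_1 {n : ℕ} (p : Fin n → ℕ) (hp : ∀ j, 0 < p j)
    (T : ℕ) (hT : T = ∑ j, p j)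
    (f : Fin n → ℕ → ℝ) (hfnn : ∀ j t, 0 ≤ f j t)
    (hfmono : ∀ j, ∀ s t : ℕ, s ≤ t → t ≤ T → f j s ≤ f j t)
    (x : Fin n → ℕ → ℝ) (hx : FeasP p T x) :
    ∃ xb : Fin n → ℕ → ℝ, FeasP p T xb ∧ (∀ j, ∑ t ∈ Icc 1 T, xb j t = 1) ∧
      costP f T xb ≤ costP f T x := by
  classical
  obtain rfl | hn := Nat.eq_zero_or_pos n
  · exact ⟨x, hx, fun j => j.elim0, le_rfl⟩
  have hT1 : 1 ≤ T := by
    rw [hT]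
    have h1 := Finset.single_le_sum (f := p) (fun j _ => Nat.zero_le _)
      (Finset.mem_univ (⟨0, hn⟩ : Fin n))
    have h2 := hp ⟨0, hn⟩
    omega
  have hS1 : ∀ j, (1 : ℝ) ≤ suffixS T x j 1 := by
    intro j
    have hmem : (1 : ℕ) ∈ Icc 1 T := by simp [hT1]
    have h := hx.2 1 hmem (univ.erase j)
    have hpT : p j ≤ T := hT ▸ Finset.single_le_sum (fun j _ => Nat.zero_le _) (mem_univ j)
    have hadd := Finset.add_sum_erase univ p (mem_univ j)
    have hsumerase : ∑ k ∈ univ.erase j, p k = T - p j := by omega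
    have hres : resD p T 1 (univ.erase j) = p j := by
      simp only [resD, demandD, hsumerase]
      omega
    have hfilter : univ.filter (fun k : Fin n => k ∉ univ.erase j) = {j} := by
      ext k
      simp only [Finset.mem_filter, mem_univ, true_and, Finset.mem_erase, mem_singleton]
      tauto
    rw [hfilter, Finset.sum_singleton] at h
    have hpt : ptrunc p T 1 (univ.erase j) j = p j := by simp [ptrunc, hres]
    rw [hpt, hres, ← Finset.mul_sum] at h
    have hp0 : (0 : ℝ) < p j := by exact_mod_cast hp j
    have h1 : (1 : ℝ) ≤ ∑ s ∈ Icc 1 T, x j s :=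
      le_of_mul_le_mul_left (by rw [mul_one]; exact h) hp0
    simpa [suffixS] using h1
  refine ⟨xbar T x, ⟨?_, ?_⟩, ?_, ?_⟩
  · -- nonnegativity
    intro j s
    unfold xbar
    split
    · rename_i hs
      simp only [mem_Icc] at hs
      have hmono : suffixS T x j (s + 1) ≤ suffixS T x j s := by
        apply Finset.sum_le_sum_of_subset_of_nonneg
        · intro k hk
          simp only [mem_Icc] at hk ⊢
          omega
        · exact fun k _ _ => hx.1 j k
      have := min_le_min (le_refl (1 : ℝ)) hmono
      linarith
    · exact le_rfl
  · -- knapsack-cover inequalities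
    intro t ht A
    refine (key_ineq p T x hx t ht A).trans (le_of_eq ?_)
    refine Finset.sum_congr rfl fun j _ => ?_
    simp only [mem_Icc] at ht
    rw [← xbar_sum T x j t ht.1 (by omega), Finset.mul_sum]
  · -- assignment constraints
    intro j
    rw [xbar_sum T x j 1 le_rfl (by omega), min_eq_left (hS1 j)]
  · -- cost
    unfold costP
    refine Finset.sum_le_sum fun j _ => Finset.sum_le_sum fun t htm => ?_
    refine mul_le_mul_of_nonneg_left ?_ (hfnn j t)
    unfold xbar
    rw [if_pos htm]
    simp only [mem_Icc] at htm
    rw [suffixS_step T x j t htm.2]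
    have hS0 : 0 ≤ suffixS T x j (t + 1) := Finset.sum_nonneg fun s _ => hx.1 j s
    have hx0 := hx.1 j t
    rcases le_total (1 : ℝ) (suffixS T x j (t + 1)) with h | h
    · rw [min_eq_left h]
      have := min_le_left 1 (x j t + suffixS T x j (t + 1))
      linarith
    · rw [min_eq_right h]
      have := min_le_right 1 (x j t + suffixS T x j (t + 1))
      linarith
end

section
/- Let x be a feasible solution to (P) with x_{jt} ∈ {0,1} for all j,t and ∑_{t∈𝒯} x_{jt} = 1 for every j ∈ 𝒥, and let d_j denote the unique t with x_{jt} = 1. Then d is a feasible due-date assignment: processing the jobs consecutively without idle time from time 0 in nondecreasing order of d_j completes every job j by time d_j, and the cost ∑_{j∈𝒥} f_j(C_j) of this schedule (where C_j is the completion time of j) is at most ∑_{j∈𝒥} ∑_{t∈𝒯} f_j(t) x_{jt}. -/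
open Finset

/-- Let `x` be a feasible solution to (P) with `x_{jt} ∈ {0,1}` and
`∑_{t∈𝒯} x_{jt} = 1` for every job `j`, and let `d j` denote the unique `t ∈ 𝒯` with
`x_{j,t} = 1`.  Then `d` is a feasible due-date assignment; processing the jobs
consecutively without idle time from time 0 in nondecreasing order of `d j` (a
permutation `π` with `d ∘ π` monotone, position `π.symm j` for job `j`) completes every
job `j` by time `d j`, and the cost `∑_j f_j(C_j)` of this schedule is at most
`∑_{j∈𝒥} ∑_{t∈𝒯} f_j(t) x_{jt}`. -/
theorem stmt_5 {n : ℕ} (p : Fin n → ℕ) (hp : ∀ j, 0 < p j)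
    (T : ℕ) (hT : T = ∑ j, p j)
    (f : Fin n → ℕ → ℝ) (hfnn : ∀ j t, 0 ≤ f j t)
    (hfmono : ∀ j, ∀ s t : ℕ, s ≤ t → t ≤ T → f j s ≤ f j t)
    (x : Fin n → ℕ → ℝ) (hx : FeasP p T x)
    (hx01 : ∀ j t, x j t = 0 ∨ x j t = 1)
    (hxa : ∀ j, ∑ t ∈ Icc 1 T, x j t = 1)
    (d : Fin n → ℕ) (hdT : ∀ j, d j ∈ Icc 1 T) (hdx : ∀ j, x j (d j) = 1) :
    FeasDue p T d ∧
      ∀ π : Equiv.Perm (Fin n), Monotone (fun i => d (π i)) →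
        (∀ j, ∑ k ∈ univ.filter (fun k => π.symm k ≤ π.symm j), p k ≤ d j) ∧
        ∑ j, f j (∑ k ∈ univ.filter (fun k => π.symm k ≤ π.symm j), p k) ≤ costP f T x := by

  classical
  -- x j s = 0 for s ∈ Icc 1 T with s ≠ d j
  have hzero : ∀ j, ∀ s ∈ Icc 1 T, s ≠ d j → x j s = 0 := by
    intro j s hs hne
    have hd : d j ∈ Icc 1 T := hdT j
    have h1 : x j (d j) + ∑ t ∈ (Icc 1 T).erase (d j), x j t = 1 := by
      rw [Finset.add_sum_erase _ _ hd]; exact hxa j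
    have hrest : ∑ t ∈ (Icc 1 T).erase (d j), x j t = 0 := by
      have := hdx j; linarith
    have := (Finset.sum_eq_zero_iff_of_nonneg (fun t _ => hx.1 j t)).mp hrest
    exact this s (Finset.mem_erase.mpr ⟨hne, hs⟩)
  have hdue : FeasDue p T d := by
    refine ⟨hdT, ?_⟩
    intro t ht
    set A : Finset (Fin n) := univ.filter (fun j => t ≤ d j) with hA
    have hcon := hx.2 t ht A
    have hRHS0 : ∑ j ∈ univ.filter (fun j => j ∉ A), ∑ s ∈ Icc t T,
        (ptrunc p T t A j : ℝ) * x j s = 0 := by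
      apply Finset.sum_eq_zero; intro j hj
      apply Finset.sum_eq_zero; intro s hs
      have hjA : ¬ t ≤ d j := by
        have := (Finset.mem_filter.mp hj).2
        simpa [hA] using this
      have hs' := Finset.mem_Icc.mp hs
      have ht' := Finset.mem_Icc.mp ht
      have : x j s = 0 := by
        apply hzero j s (Finset.mem_Icc.mpr ⟨le_trans ht'.1 hs'.1, hs'.2⟩)
        omega
      simp [this]
    rw [hRHS0] at hcon
    have hres : resD p T t A = 0 := by exact_mod_cast le_antisymm (by exact_mod_cast hcon) (Nat.zero_le _)
    have := Nat.sub_eq_zero_iff_le.mp hres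
    simpa [hA] using this
  refine ⟨hdue, ?_⟩
  intro π hmono
  have hC : ∀ j, ∑ k ∈ univ.filter (fun k => π.symm k ≤ π.symm j), p k ≤ d j := by
    intro j
    have hsub : univ.filter (fun k => π.symm k ≤ π.symm j) ⊆
        univ.filter (fun k => d k ≤ d j) := by
      intro k hk
      have hk' := (Finset.mem_filter.mp hk).2
      have := hmono hk'
      simp only [Equiv.apply_symm_apply] at this
      exact Finset.mem_filter.mpr ⟨Finset.mem_univ _, this⟩
    have h1 : ∑ k ∈ univ.filter (fun k => π.symm k ≤ π.symm j), p k ≤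
        ∑ k ∈ univ.filter (fun k => d k ≤ d j), p k :=
      Finset.sum_le_sum_of_subset hsub
    have hdj := Finset.mem_Icc.mp (hdT j)
    rcases eq_or_lt_of_le hdj.2 with heq | hlt
    · calc ∑ k ∈ univ.filter (fun k => π.symm k ≤ π.symm j), p k
          ≤ ∑ k ∈ univ.filter (fun k => d k ≤ d j), p k := h1
        _ ≤ ∑ k, p k := Finset.sum_le_sum_of_subset (Finset.filter_subset _ _)
        _ = T := hT.symm
        _ = d j := heq.symm
    · have ht : d j + 1 ∈ Icc 1 T := Finset.mem_Icc.mpr ⟨by omega, by omega⟩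
      have h2 := hdue.2 _ ht
      have hpart : ∑ k ∈ univ.filter (fun k => d k ≤ d j), p k +
          ∑ k ∈ univ.filter (fun k => ¬ d k ≤ d j), p k = T := by
        rw [Finset.sum_filter_add_sum_filter_not]; exact hT.symm
      have hfe : univ.filter (fun k : Fin n => d j + 1 ≤ d k) =
          univ.filter (fun k => ¬ d k ≤ d j) := by
        apply Finset.filter_congr; intro k _; constructor <;> intro h <;> omega
      rw [hfe] at h2
      have hdem : demandD T (d j + 1) = T - d j := by
        simp [demandD]
      rw [hdem] at h2
      omega
  refine ⟨hC, ?_⟩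
  unfold costP
  apply Finset.sum_le_sum
  intro j _
  have hdj := Finset.mem_Icc.mp (hdT j)
  have step1 : f j (∑ k ∈ univ.filter (fun k => π.symm k ≤ π.symm j), p k) ≤ f j (d j) :=
    hfmono j _ _ (hC j) hdj.2
  have step2 : ∑ t ∈ Icc 1 T, f j t * x j t = f j (d j) := by
    rw [Finset.sum_eq_single_of_mem (d j) (hdT j)]
    · rw [hdx j, mul_one]
    · intro b hb hne
      rw [hzero j b hb hne, mul_zero]
  linarith
end

section
/- For any feasible solution y to the dual (D) and any feasible due-date assignment d : 𝒥 → 𝒯, the dual value is a lower bound on the schedule cost: ∑_{t∈𝒯} ∑_{A⊆𝒥} D(t,A) y(t,A) ≤ ∑_{j∈𝒥} f_j(d_j). -/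
open Finset

/-- Key covering lemma: the residual demand is covered by truncated processing
times of jobs not in `A` with due date at least `t`. -/
lemma key_cover {n : ℕ} (p : Fin n → ℕ) (T t : ℕ) (d : Fin n → ℕ) (A : Finset (Fin n))
    (hdem : demandD T t ≤ ∑ j ∈ univ.filter (fun j => t ≤ d j), p j) :
    resD p T t A ≤ ∑ j ∈ univ.filter (fun j => j ∉ A ∧ t ≤ d j), ptrunc p T t A j := by
  by_cases hcase : ∃ j ∈ univ.filter (fun j => j ∉ A ∧ t ≤ d j), resD p T t A ≤ p j
  · obtain ⟨j, hj, hjr⟩ := hcase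
    have h1 : resD p T t A = ptrunc p T t A j := (min_eq_right hjr).symm
    rw [h1]
    exact Finset.single_le_sum (fun i _ => Nat.zero_le _) hj
  · push_neg at hcase
    have heq : ∑ j ∈ univ.filter (fun j => j ∉ A ∧ t ≤ d j), ptrunc p T t A j
        = ∑ j ∈ univ.filter (fun j => j ∉ A ∧ t ≤ d j), p j :=
      Finset.sum_congr rfl fun j hj => min_eq_left (le_of_lt (hcase j hj))
    rw [heq]
    unfold resD
    rw [tsub_le_iff_right]
    have hsub : univ.filter (fun j => t ≤ d j) ⊆
        univ.filter (fun j : Fin n => j ∉ A ∧ t ≤ d j) ∪ A := by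
      intro j hj
      simp only [mem_filter, mem_univ, true_and] at hj
      by_cases hjA : j ∈ A
      · exact Finset.mem_union_right _ hjA
      · exact Finset.mem_union_left _ (by simp [hjA, hj])
    calc demandD T t ≤ ∑ j ∈ univ.filter (fun j => t ≤ d j), p j := hdem
      _ ≤ ∑ j ∈ univ.filter (fun j : Fin n => j ∉ A ∧ t ≤ d j) ∪ A, p j :=
          Finset.sum_le_sum_of_subset hsub
      _ ≤ ∑ j ∈ univ.filter (fun j : Fin n => j ∉ A ∧ t ≤ d j), p j + ∑ j ∈ A, p j := by
          rw [← Finset.union_sdiff_self_eq_union, Finset.sum_union Finset.disjoint_sdiff]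
          exact Nat.add_le_add_left (Finset.sum_le_sum_of_subset (Finset.sdiff_subset)) _

/-- For any feasible solution `y` to the dual (D) and any feasible
due-date assignment `d : 𝒥 → 𝒯`, the dual value is a lower bound on the schedule cost:
`∑_{t∈𝒯} ∑_{A⊆𝒥} D(t,A) y(t,A) ≤ ∑_{j∈𝒥} f_j(d_j)`. -/
theorem stmt_7 {n : ℕ} (p : Fin n → ℕ) (hp : ∀ j, 0 < p j)
    (T : ℕ) (hT : T = ∑ j, p j)
    (f : Fin n → ℕ → ℝ) (hfnn : ∀ j t, 0 ≤ f j t)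
    (hfmono : ∀ j, ∀ s t : ℕ, s ≤ t → t ≤ T → f j s ≤ f j t)
    (y : ℕ → Finset (Fin n) → ℝ) (hy : FeasD p T f y)
    (d : Fin n → ℕ) (hd : FeasDue p T d) :
    valD p T y ≤ ∑ j, f j (d j) := by
  obtain ⟨hynn, hyfeas⟩ := hy
  obtain ⟨hdmem, hdcov⟩ := hd
  have step1 : valD p T y ≤
      ∑ t ∈ Icc 1 T, ∑ A : Finset (Fin n),
        (∑ j ∈ univ.filter (fun j => j ∉ A ∧ t ≤ d j), (ptrunc p T t A j : ℝ)) * y t A := by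
    unfold valD
    refine Finset.sum_le_sum fun t ht => Finset.sum_le_sum fun A _ => ?_
    refine mul_le_mul_of_nonneg_right ?_ (hynn t A)
    have := key_cover p T t d A (hdcov t ht)
    exact_mod_cast this
  have step2 : ∀ t : ℕ,
      (∑ A : Finset (Fin n),
        (∑ j ∈ univ.filter (fun j => j ∉ A ∧ t ≤ d j), (ptrunc p T t A j : ℝ)) * y t A)
      = ∑ j, if t ≤ d j then
          ∑ A ∈ univ.filter (fun A : Finset (Fin n) => j ∉ A), (ptrunc p T t A j : ℝ) * y t A
        else 0 := by
    intro t
    have : ∀ A : Finset (Fin n),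
        (∑ j ∈ univ.filter (fun j => j ∉ A ∧ t ≤ d j), (ptrunc p T t A j : ℝ)) * y t A
        = ∑ j, if j ∉ A ∧ t ≤ d j then (ptrunc p T t A j : ℝ) * y t A else 0 := by
      intro A
      rw [Finset.sum_mul, Finset.sum_filter]
    simp_rw [this]
    rw [Finset.sum_comm]
    refine Finset.sum_congr rfl fun j _ => ?_
    by_cases h : t ≤ d j <;> simp [h, Finset.sum_filter]
  have step3 : ∀ j : Fin n,
      (∑ t ∈ Icc 1 T, if t ≤ d j then
          ∑ A ∈ univ.filter (fun A : Finset (Fin n) => j ∉ A), (ptrunc p T t A j : ℝ) * y t A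
        else 0)
      = ∑ t ∈ Icc 1 (d j), ∑ A ∈ univ.filter (fun A : Finset (Fin n) => j ∉ A),
          (ptrunc p T t A j : ℝ) * y t A := by
    intro j
    rw [← Finset.sum_filter]
    have hdj : d j ≤ T := (mem_Icc.mp (hdmem j)).2
    congr 1
    ext t
    simp only [mem_filter, mem_Icc]
    constructor
    · rintro ⟨⟨h1, _⟩, h3⟩; exact ⟨h1, h3⟩
    · rintro ⟨h1, h2⟩; exact ⟨⟨h1, h2.trans hdj⟩, h2⟩
  calc valD p T y
      ≤ ∑ t ∈ Icc 1 T, ∑ A : Finset (Fin n),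
          (∑ j ∈ univ.filter (fun j => j ∉ A ∧ t ≤ d j), (ptrunc p T t A j : ℝ)) * y t A :=
        step1
    _ = ∑ t ∈ Icc 1 T, ∑ j, if t ≤ d j then
          ∑ A ∈ univ.filter (fun A : Finset (Fin n) => j ∉ A), (ptrunc p T t A j : ℝ) * y t A
        else 0 := Finset.sum_congr rfl fun t _ => step2 t
    _ = ∑ j, ∑ t ∈ Icc 1 T, if t ≤ d j then
          ∑ A ∈ univ.filter (fun A : Finset (Fin n) => j ∉ A), (ptrunc p T t A j : ℝ) * y t A
        else 0 := Finset.sum_comm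
    _ = ∑ j, ∑ t ∈ Icc 1 (d j), ∑ A ∈ univ.filter (fun A : Finset (Fin n) => j ∉ A),
          (ptrunc p T t A j : ℝ) * y t A := Finset.sum_congr rfl fun j _ => step3 j
    _ ≤ ∑ j, f j (d j) := Finset.sum_le_sum fun j _ => hyfeas j (d j) (hdmem j)
end

section
/- For the four-job instance with parameter p, every feasible due-date assignment d satisfies ∑_{j=1}^4 f_j(d_j) ≥ 4p. -/
open Finset ENNReal

/-- The cost functions of the four-job tight instance with parameter `p`:
jobs `0,1` cost `0` on `[1, p−1]`, `p` on `[p, 3p−1]`, and `∞` afterwards;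
jobs `2,3` cost `0` on `[1, 3p−2]` and `p` afterwards. -/
noncomputable def f8 (p : ℕ) (j : Fin 4) (t : ℕ) : ℝ≥0∞ :=
  if (j : ℕ) < 2 then
    if t ≤ p - 1 then 0 else if t ≤ 3 * p - 1 then (p : ℝ≥0∞) else ⊤
  else
    if t ≤ 3 * p - 2 then 0 else (p : ℝ≥0∞)

/-
Feasibility at `t = p` forces all four due dates to be at least `p`, and feasibility at
`t = 3p` forces two of them to be at least `3p`. So jobs `0` and `1` each cost at least `p`;
if one of them is among the two late jobs its cost is `∞`, and otherwise jobs `2` and `3`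
are the late ones and each costs `p`.
-/

lemma lt_card_filter_of_mul_add_one_le_sum {ι : Type*} (s : Finset ι) (d : ι → ℕ)
    {p k t : ℕ} (h : k * p + 1 ≤ ∑ _ ∈ s.filter (fun j => t ≤ d j), p) :
    k < #(s.filter fun j => t ≤ d j) := by
  rw [sum_const, smul_eq_mul] at h
  by_contra! hk
  have := Nat.mul_le_mul_right p hk
  omega

section f8

variable {p t : ℕ} {j : Fin 4}

lemma f8_eq_top (hj : (j : ℕ) < 2) (hp : 0 < p) (ht : 3 * p ≤ t) : f8 p j t = ⊤ := by
  rw [f8, if_pos hj, if_neg (by omega), if_neg (by omega)]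

lemma le_f8_of_lt_two (hj : (j : ℕ) < 2) (hp : 0 < p) (ht : p ≤ t) : (p : ℝ≥0∞) ≤ f8 p j t := by
  rw [f8, if_pos hj, if_neg (by omega)]
  split_ifs <;> simp

lemma le_f8_of_three_mul_le (hp : 0 < p) (ht : 3 * p ≤ t) : (p : ℝ≥0∞) ≤ f8 p j t := by
  by_cases hj : (j : ℕ) < 2
  · exact le_f8_of_lt_two hj hp (by omega)
  · rw [f8, if_neg hj, if_neg (by omega)]

end f8

theorem stmt_8_general (p : ℕ) (d : Fin 4 → ℕ)
    (hfeas : ∀ t ∈ Icc 1 (4 * p),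
      4 * p + 1 - t ≤ ∑ j ∈ univ.filter (fun j : Fin 4 => t ≤ d j), p) :
    ((4 * p : ℕ) : ℝ≥0∞) ≤ ∑ j, f8 p j (d j) := by
  rcases Nat.eq_zero_or_pos p with rfl | hp
  · simp
  have hall : ∀ j, p ≤ d j := by
    have h := lt_card_filter_of_mul_add_one_le_sum univ d (p := p) (k := 3) (t := p)
      (by have := hfeas p (mem_Icc.2 ⟨hp, by omega⟩); omega)
    have hcard : #(univ.filter fun j => p ≤ d j) = #(univ : Finset (Fin 4)) :=
      le_antisymm (card_filter_le _ _) (by rwa [card_univ, Fintype.card_fin])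
    exact fun j => card_filter_eq_iff.1 hcard j (mem_univ j)
  obtain ⟨i, hi, k, hk, hik⟩ := one_lt_card.1 <|
    lt_card_filter_of_mul_add_one_le_sum univ d (p := p) (k := 1) (t := 3 * p)
      (by have := hfeas (3 * p) (mem_Icc.2 ⟨by omega, by omega⟩); omega)
  rw [mem_filter] at hi hk
  by_cases hearly : ∃ j : Fin 4, (j : ℕ) < 2 ∧ 3 * p ≤ d j
  · obtain ⟨j, hj, hdj⟩ := hearly
    rw [ENNReal.sum_eq_top.2 ⟨j, mem_univ _, f8_eq_top hj hp hdj⟩]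
    exact le_top
  push Not at hearly
  have hlate : 3 * p ≤ d 2 ∧ 3 * p ≤ d 3 := by
    have h0 := hearly 0 (by decide)
    have h1 := hearly 1 (by decide)
    fin_cases i <;> fin_cases k <;>
      simp only [Fin.zero_eta, Fin.mk_one, Fin.reduceFinMk] at hi hk hik ⊢ <;> omega
  calc ((4 * p : ℕ) : ℝ≥0∞) = p + p + p + p := by push_cast; ring
    _ ≤ ∑ j, f8 p j (d j) := by
      rw [Fin.sum_univ_four]
      gcongr
      · exact le_f8_of_lt_two (by decide) hp (hall 0)
      · exact le_f8_of_lt_two (by decide) hp (hall 1)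
      · exact le_f8_of_three_mul_le hp hlate.1
      · exact le_f8_of_three_mul_le hp hlate.2

/-- For the four-job instance with parameter `p ≥ 4` (four jobs of
processing time `p`, so `T = 4p`), every feasible due-date assignment `d` satisfies
`∑_{j=1}^{4} f_j(d_j) ≥ 4p`. -/
theorem stmt_8 (p : ℕ) (hp : 4 ≤ p) (d : Fin 4 → ℕ)
    (hdT : ∀ j, d j ∈ Icc 1 (4 * p))
    (hfeas : ∀ t ∈ Icc 1 (4 * p),
      4 * p + 1 - t ≤ ∑ j ∈ univ.filter (fun j : Fin 4 => t ≤ d j), p) :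
    ((4 * p : ℕ) : ℝ≥0∞) ≤ ∑ j, f8 p j (d j) :=
  stmt_8_general p d hfeas
end

section
/- For the four-job instance with parameter p, the vector y defined by y(3p−1, ∅) = 1 and y(t,A) = 0 for all other pairs (t,A) is a feasible solution to the dual (D), and its value equals ∑_{t∈𝒯} ∑_{A⊆𝒥} D(t,A) y(t,A) = D(3p−1, ∅) = p + 2. -/
open Finset ENNReal

/-
The dual vector is the point mass at `(3p − 1, ∅)`, so every dual sum collapses to its term at
that pair. There the demand is `4p + 1 − (3p − 1) = p + 2`, which is the dual value, and every
job contributes `min{p, p + 2} = p` to its constraints from time `3p − 1` on; from that time on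
every cost function is already at least `p`.
-/

theorem sum_sum_mul_ite_and_eq {α β M : Type*} [DecidableEq α] [DecidableEq β]
    [NonAssocSemiring M] (I : Finset α) (S : Finset β) (c : α → β → M) (t₀ : α) (A₀ : β) :
    ∑ t ∈ I, ∑ A ∈ S, c t A * (if t = t₀ ∧ A = A₀ then 1 else 0) =
      if t₀ ∈ I ∧ A₀ ∈ S then c t₀ A₀ else 0 := by
  simp only [mul_ite, mul_one, mul_zero, ite_and, sum_ite_irrel, sum_const_zero,
    sum_ite_eq']

theorem le_f8_of_le {p : ℕ} (hp : 1 ≤ p) (j : Fin 4) {s : ℕ} (hs : 3 * p - 1 ≤ s) :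
    (p : ℝ≥0∞) ≤ f8 p j s := by
  unfold f8
  split_ifs <;> first | omega | exact le_rfl | exact le_top

/-- For the four-job instance with parameter `p ≥ 4` (four jobs of
processing time `p`, `T = 4p`, demand `D(t,A) = max{T − t + 1 − ∑_{i∈A} p, 0}` and
`p_j(t,A) = min{p, D(t,A)}`), the vector `y` with `y(3p−1, ∅) = 1` and `y(t,A) = 0`
otherwise is feasible for the dual (D), and its value
`∑_{t∈𝒯} ∑_{A⊆𝒥} D(t,A) y(t,A) = D(3p−1, ∅)` equals `p + 2`. -/
theorem stmt_9 (p : ℕ) (hp : 4 ≤ p)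
    (y : ℕ → Finset (Fin 4) → ℝ≥0∞)
    (hy : y = fun t A => if t = 3 * p - 1 ∧ A = ∅ then 1 else 0) :
    (∀ j : Fin 4, ∀ s ∈ Icc 1 (4 * p),
      ∑ t ∈ Icc 1 s, ∑ A ∈ univ.filter (fun A : Finset (Fin 4) => j ∉ A),
        ((min p (4 * p + 1 - t - ∑ _i ∈ A, p) : ℕ) : ℝ≥0∞) * y t A ≤ f8 p j s) ∧
    ∑ t ∈ Icc 1 (4 * p), ∑ A : Finset (Fin 4),
      ((4 * p + 1 - t - ∑ _i ∈ A, p : ℕ) : ℝ≥0∞) * y t A = (p : ℝ≥0∞) + 2 := by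
  subst hy
  have hdemand : 4 * p + 1 - (3 * p - 1) - ∑ _i ∈ (∅ : Finset (Fin 4)), p = p + 2 := by
    rw [sum_empty]; omega
  refine ⟨fun j s _ => ?_, ?_⟩
  · rw [sum_sum_mul_ite_and_eq, hdemand, min_eq_left (Nat.le_add_right p 2)]
    split_ifs with hmem
    · exact le_f8_of_le (by omega) j (mem_Icc.mp hmem.1).2
    · exact zero_le
  · rw [sum_sum_mul_ite_and_eq, if_pos ⟨mem_Icc.mpr (by omega), mem_univ _⟩, hdemand]
    push_cast
    rfl
end

section
/- Suppose the cost functions f_j are integer-valued, not all identically zero, let P = max_{j∈𝒥} p_j and W = max_{j∈𝒥, t∈𝒯} (f_j(t) − f_j(t−1)) (with f_j(0) := 0). Then the set of interval endpoints satisfies |𝒯̂| ≤ 1 + n·(2 + log_{1+ε}(nPW)); in particular the number of intervals in the partition is O(n log(nPW)). -/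
open Finset
open scoped Classical

/-- `t` belongs to class `k` of the cost function `g`: class `0` is `{t : g t = 0}` and,
for `k ≥ 1`, class `k` is `{t : (1+ε)^(k−1) ≤ g t < (1+ε)^k}`. -/
def InClass (ε : ℝ) (g : ℕ → ℕ) (k t : ℕ) : Prop :=
  if k = 0 then g t = 0
  else (1 + ε) ^ (k - 1) ≤ (g t : ℝ) ∧ (g t : ℝ) < (1 + ε) ^ k

/-- The set `𝒯̂_j` of left endpoints: the times `t ∈ 𝒯 = {1,…,T}` that are the minimum
element of some (nonempty) class of `g`. -/
noncomputable def leftEnds (T : ℕ) (ε : ℝ) (g : ℕ → ℕ) : Finset ℕ :=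
  (Icc 1 T).filter fun t => ∃ k : ℕ,
    InClass ε g k t ∧ ∀ s ∈ Icc 1 T, InClass ε g k s → t ≤ s

/-!
A time of positive cost `g t` lies in class `⌊log_{1+ε} (g t)⌋ + 1` and in no other, so a left
endpoint is determined by its class index; times of cost at most `M` have index at most
`⌊log_{1+ε} M⌋ + 1`, which leaves at most `⌊log_{1+ε} M⌋ + 2` left endpoints per job. All costs
on `𝒯` are at most `M = nPW`, since `f_j(t) ≤ tW` by summing increments and `t ≤ T ≤ nP`.
-/

noncomputable def classIndex (ε : ℝ) (g : ℕ → ℕ) (t : ℕ) : ℕ :=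
  if g t = 0 then 0 else ⌊Real.logb (1 + ε) (g t)⌋₊ + 1

section Classes

variable {ε : ℝ} {g : ℕ → ℕ}

lemma inClass_classIndex (hε : 0 < ε) (g : ℕ → ℕ) (t : ℕ) :
    InClass ε g (classIndex ε g t) t := by
  have hb : (1 : ℝ) < 1 + ε := by linarith
  unfold classIndex
  by_cases h : g t = 0
  · simp [InClass, h]
  rw [if_neg h]
  have hg : (1 : ℝ) ≤ g t := by exact_mod_cast Nat.one_le_iff_ne_zero.mpr h
  set l := Real.logb (1 + ε) (g t)
  have hpow : (1 + ε) ^ l = (g t : ℝ) := Real.rpow_logb (by linarith) hb.ne' (by linarith)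
  refine ⟨?_, ?_⟩
  · rw [Nat.add_sub_cancel, ← Real.rpow_natCast, ← hpow]
    exact Real.rpow_le_rpow_of_exponent_le hb.le (Nat.floor_le (Real.logb_nonneg hb hg))
  · rw [← Real.rpow_natCast, ← hpow]
    exact Real.rpow_lt_rpow_of_exponent_lt hb (by push_cast; exact Nat.lt_floor_add_one l)

lemma InClass.le (hε : 0 < ε) {a b t : ℕ} (ha : InClass ε g a t) (hb : InClass ε g b t) :
    b ≤ a := by
  by_contra! hab
  have hb0 : b ≠ 0 := by omega
  simp only [InClass, if_neg hb0] at hb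
  rcases Nat.eq_zero_or_pos a with rfl | ha0
  · simp only [InClass] at ha
    rw [ha, Nat.cast_zero] at hb
    linarith [hb.1, pow_pos (by linarith : (0 : ℝ) < 1 + ε) (b - 1)]
  · simp only [InClass, if_neg ha0.ne'] at ha
    have : (1 + ε) ^ a ≤ (1 + ε) ^ (b - 1) := pow_le_pow_right₀ (by linarith) (by omega)
    linarith [ha.2, hb.1]

lemma inClass_iff_eq_classIndex (hε : 0 < ε) {k t : ℕ} :
    InClass ε g k t ↔ k = classIndex ε g t := by
  have h' := inClass_classIndex hε g t
  exact ⟨fun h => le_antisymm (h'.le hε h) (h.le hε h'), fun h => h ▸ h'⟩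

lemma classIndex_le (hε : 0 < ε) {M t : ℕ} (ht : g t ≤ M) :
    classIndex ε g t ≤ ⌊Real.logb (1 + ε) M⌋₊ + 1 := by
  unfold classIndex
  split_ifs with h
  · omega
  have hlog : Real.logb (1 + ε) (g t) ≤ Real.logb (1 + ε) M :=
    Real.logb_le_logb_of_le (by linarith)
      (by exact_mod_cast Nat.pos_of_ne_zero h) (by exact_mod_cast ht)
  have := Nat.floor_le_floor (a := Real.logb (1 + ε) (g t)) hlog
  omega

lemma classIndex_injOn_leftEnds (hε : 0 < ε) (T : ℕ) :
    Set.InjOn (classIndex ε g) (leftEnds T ε g) := by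
  intro t ht s hs hts
  simp only [coe_filter, leftEnds, Set.mem_ofPred_eq] at ht hs
  obtain ⟨htT, k, hk, hkmin⟩ := ht
  obtain ⟨hsT, k', hk', hkmin'⟩ := hs
  have hkk : k' = k := by
    rw [(inClass_iff_eq_classIndex hε).1 hk, (inClass_iff_eq_classIndex hε).1 hk', hts]
  exact le_antisymm (hkmin s hsT (hkk ▸ hk')) (hkmin' t htT (hkk.symm ▸ hk))

lemma card_leftEnds_le (hε : 0 < ε) (T M : ℕ) (hg : ∀ t ∈ Icc 1 T, g t ≤ M) :
    #(leftEnds T ε g) ≤ ⌊Real.logb (1 + ε) M⌋₊ + 2 := by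
  have := card_le_card_of_injOn (t := range (⌊Real.logb (1 + ε) M⌋₊ + 2)) (classIndex ε g)
    (fun t ht => by
      have htT : t ∈ Icc 1 T := (mem_filter.1 ht).1
      simpa [Nat.lt_succ_iff] using classIndex_le hε (hg t htT))
    (classIndex_injOn_leftEnds hε T)
  simpa using this

end Classes

lemma le_mul_of_forall_sub_le {g : ℕ → ℕ} {T W : ℕ} (hg0 : g 0 = 0)
    (hW : ∀ t ∈ Icc 1 T, g t - g (t - 1) ≤ W) : ∀ t ≤ T, g t ≤ t * W := by
  intro t
  induction t with
  | zero => simp [hg0]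
  | succ t ih =>
    intro ht
    have hstep := hW (t + 1) (mem_Icc.2 ⟨by omega, ht⟩)
    rw [Nat.add_sub_cancel] at hstep
    have := ih (by omega)
    rw [Nat.succ_mul]
    omega

lemma natFloor_logb_le_log_div_log {b : ℝ} (hb : 1 < b) (M : ℕ) :
    (⌊Real.logb b M⌋₊ : ℝ) ≤ Real.log M / Real.log b :=
  Real.log_div_log (b := b) ▸
    Nat.floor_le (div_nonneg (Real.log_natCast_nonneg M) (Real.log_nonneg hb.le))

theorem stmt_11_general {n : ℕ} (ε : ℝ) (hε : 0 < ε)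
    (p : Fin n → ℕ)
    (T : ℕ) (hT : T = ∑ j, p j)
    (f : Fin n → ℕ → ℕ) (hf0 : ∀ j, f j 0 = 0)
    (P W : ℕ) (hP : P = univ.sup p)
    (hW : W = univ.sup fun j => (Icc 1 T).sup fun t => f j t - f j (t - 1)) :
    (((univ.biUnion fun j => leftEnds T ε (f j)) ∪ {1}).card : ℝ) ≤
      1 + (n : ℝ) * (2 + Real.log ((n * P * W : ℕ) : ℝ) / Real.log (1 + ε)) := by
  set K := ⌊Real.logb (1 + ε) (n * P * W : ℕ)⌋₊
  have hTle : T ≤ n * P := by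
    simpa [hT, hP] using sum_le_card_nsmul univ p (univ.sup p) (fun j _ => le_sup (mem_univ j))
  have hincr : ∀ j, ∀ t ∈ Icc 1 T, f j t - f j (t - 1) ≤ W := fun j t ht =>
    hW ▸ (le_sup (f := fun t => f j t - f j (t - 1)) ht).trans
      (le_sup (f := fun j => (Icc 1 T).sup fun t => f j t - f j (t - 1)) (mem_univ j))
  have hbound : ∀ j, ∀ t ∈ Icc 1 T, f j t ≤ n * P * W := fun j t ht =>
    (le_mul_of_forall_sub_le (hf0 j) (hincr j) t (mem_Icc.1 ht).2).trans
      (Nat.mul_le_mul_right W ((mem_Icc.1 ht).2.trans hTle))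
  have hcard : ((univ.biUnion fun j => leftEnds T ε (f j)) ∪ {1}).card ≤ n * (K + 2) + 1 := by
    refine (card_union_le _ _).trans (Nat.add_le_add ?_ (card_singleton 1).le)
    exact (card_biUnion_le_card_mul univ _ _
      (fun j _ => card_leftEnds_le hε T _ (hbound j))).trans_eq (by rw [card_univ, Fintype.card_fin])
  have hK := natFloor_logb_le_log_div_log (by linarith : (1 : ℝ) < 1 + ε) (n * P * W)
  calc (((univ.biUnion fun j => leftEnds T ε (f j)) ∪ {1}).card : ℝ)
      ≤ n * ((K : ℝ) + 2) + 1 := by exact_mod_cast hcard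
    _ ≤ 1 + (n : ℝ) * (2 + Real.log ((n * P * W : ℕ) : ℝ) / Real.log (1 + ε)) := by
      nlinarith [Nat.cast_nonneg (α := ℝ) n]

/-- Suppose the cost functions `f_j` are (nonnegative) integer-valued
and nondecreasing, not all identically zero; let `P = max_j p_j` and
`W = max_{j,t∈𝒯} (f_j(t) − f_j(t−1))` (with `f_j(0) := 0`).  Then the set of interval
endpoints `𝒯̂ = (∪_j 𝒯̂_j) ∪ {1}` satisfies `|𝒯̂| ≤ 1 + n·(2 + log_{1+ε}(nPW))`; in
particular the number of intervals in the partition is `O(n log (nPW))`. -/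
theorem stmt_11 {n : ℕ} (ε : ℝ) (hε : 0 < ε)
    (p : Fin n → ℕ) (hp : ∀ j, 0 < p j)
    (T : ℕ) (hT : T = ∑ j, p j)
    (f : Fin n → ℕ → ℕ) (hf0 : ∀ j, f j 0 = 0)
    (hfmono : ∀ j, ∀ s t : ℕ, s ≤ t → t ≤ T → f j s ≤ f j t)
    (hnz : ∃ j, ∃ t ∈ Icc 1 T, f j t ≠ 0)
    (P W : ℕ) (hP : P = univ.sup p)
    (hW : W = univ.sup fun j => (Icc 1 T).sup fun t => f j t - f j (t - 1)) :
    (((univ.biUnion fun j => leftEnds T ε (f j)) ∪ {1}).card : ℝ) ≤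
      1 + (n : ℝ) * (2 + Real.log ((n * P * W : ℕ) : ℝ) / Real.log (1 + ε)) :=
  stmt_11_general ε hε p T hT f hf0 P W hP hW
end

section
/- If there is a feasible solution x to (IP) with objective value v = ∑_{j,t} f_j(t) x_{jt}, then there is a feasible solution x' to (IP') with objective value ∑_{j∈𝒥} ∑_{t∈𝒯̂} f'_j(t) x'_{jt} at most (1+ε)·v. -/
/-!
Each job is moved from its time `u` to the last endpoint of `𝒯̂` not after `u` (which exists
because `1 ∈ 𝒯̂`). For an endpoint `t`, a job sits at or after `t` after the move
exactly when it did before, so the assignment and demand constraints carry over. If `t` is the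
endpoint chosen for `u` and `m` is the time just before the next endpoint, then `u ≤ m` and
the class of `f_j(m)` starts at an endpoint that is at most `t ≤ u`; hence
`f'_j(t) = f_j(m) ≤ (1 + ε) f_j(u)`.
-/

open Finset
open scoped Classical

/-- The set of interval endpoints `𝒯̂ = (∪_{j∈𝒥} 𝒯̂_j) ∪ {1}`. -/
noncomputable def That {n : ℕ} (T : ℕ) (ε : ℝ) (f : Fin n → ℕ → ℕ) : Finset ℕ :=
  (univ.biUnion fun j => leftEnds T ε (f j)) ∪ {1}

/-- The rounded cost function `f'`: writing `𝒯̂ = {t_1 < t_2 < ⋯ < t_τ}`, we set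
`f'_j(t_i) = f_j(t_{i+1} − 1)` for `i < τ` and `f'_j(t_τ) = f_j(T)`.  (For `t ∈ 𝒯̂`, the
`min` below is the next endpoint of `𝒯̂` after `t`, or `T + 1` if there is none.) -/
noncomputable def fround {n : ℕ} (T : ℕ) (ε : ℝ) (f : Fin n → ℕ → ℕ)
    (j : Fin n) (t : ℕ) : ℕ :=
  f j ((((That T ε f).filter fun s => t < s).min.untopD (T + 1)) - 1)

section PushAlong

variable {ι κ M R : Type*}

noncomputable def pushAlong [AddCommMonoid M] (A : Finset ι) (φ : ι → κ) (y : ι → M) (t : κ) :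
    M :=
  ∑ u ∈ A with φ u = t, y u

variable {A : Finset ι} {S : Finset κ} {φ : ι → κ}

theorem pushAlong_le_sum [AddCommMonoid M] [PartialOrder M] [CanonicallyOrderedAdd M]
    (y : ι → M) (t : κ) : pushAlong A φ y t ≤ ∑ u ∈ A, y u :=
  sum_le_sum_of_subset (filter_subset _ _)

theorem Nat.cast_pushAlong [AddCommMonoidWithOne R] (y : ι → ℕ) (t : κ) :
    ((pushAlong A φ y t : ℕ) : R) = pushAlong A φ (fun u => (y u : R)) t :=
  Nat.cast_sum _ _

theorem sum_pushAlong [AddCommMonoid M] (hφ : ∀ u ∈ A, φ u ∈ S) (y : ι → M) :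
    ∑ t ∈ S, pushAlong A φ y t = ∑ u ∈ A, y u :=
  sum_fiberwise_of_maps_to hφ y

theorem sum_mul_pushAlong [NonUnitalNonAssocSemiring R] (hφ : ∀ u ∈ A, φ u ∈ S) (w : κ → R)
    (y : ι → R) : ∑ t ∈ S, w t * pushAlong A φ y t = ∑ u ∈ A, w (φ u) * y u := by
  rw [← sum_fiberwise_of_maps_to hφ]
  refine sum_congr rfl fun t _ => ?_
  rw [pushAlong, mul_sum]
  exact sum_congr rfl fun u hu => by rw [(mem_filter.1 hu).2]

theorem sum_filter_mul_pushAlong [NonUnitalNonAssocSemiring R] (hφ : ∀ u ∈ A, φ u ∈ S)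
    (P : κ → Prop) [DecidablePred P] (c : R) (y : ι → R) :
    ∑ t ∈ S with P t, c * pushAlong A φ y t = ∑ u ∈ A with P (φ u), c * y u := by
  simpa [sum_filter, ite_mul] using sum_mul_pushAlong hφ (fun t => if P t then c else 0) y

end PushAlong

section PrevPt

def prevPt (S : Finset ℕ) (u : ℕ) : ℕ :=
  (S.filter (· ≤ u)).sup id

variable {S : Finset ℕ} {s u : ℕ}

theorem prevPt_le (S : Finset ℕ) (u : ℕ) : prevPt S u ≤ u :=
  Finset.sup_le fun _ hs => (mem_filter.1 hs).2

theorem le_prevPt (hs : s ∈ S) (hsu : s ≤ u) : s ≤ prevPt S u :=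
  le_sup (f := id) (mem_filter.2 ⟨hs, hsu⟩)

theorem prevPt_mem (hs : s ∈ S) (hsu : s ≤ u) : prevPt S u ∈ S := by
  have hne : (S.filter (· ≤ u)).Nonempty := ⟨s, mem_filter.2 ⟨hs, hsu⟩⟩
  obtain ⟨v, hv, hv_eq⟩ := exists_mem_eq_sup _ hne id
  rw [prevPt, hv_eq]
  exact (mem_filter.1 hv).1

theorem le_prevPt_iff (hs : s ∈ S) : s ≤ prevPt S u ↔ s ≤ u :=
  ⟨fun h => h.trans (prevPt_le S u), le_prevPt hs⟩

end PrevPt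

namespace Finset

theorem untopD_min_le_of_mem {α : Type*} [LinearOrder α] {s : Finset α} {b : α} (d : α)
    (hb : b ∈ s) : s.min.untopD d ≤ b :=
  WithTop.untopD_le (min_le hb)

theorem untopD_min_mem_or_eq {α : Type*} [LinearOrder α] (s : Finset α) (d : α) :
    s.min.untopD d ∈ s ∨ s.min.untopD d = d := by
  rcases s.eq_empty_or_nonempty with rfl | hs
  · simp
  · left
    rw [← coe_min' hs, WithTop.untopD_coe]
    exact min'_mem s hs

end Finset

section Classes

variable {ε : ℝ} {g : ℕ → ℕ} {k s t : ℕ}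

theorem exists_inClass (hε : 0 < ε) (g : ℕ → ℕ) (t : ℕ) : ∃ k, InClass ε g k t := by
  rcases Nat.eq_zero_or_pos (g t) with h | h
  · exact ⟨0, by simp [InClass, h]⟩
  · obtain ⟨k, hk⟩ := exists_nat_pow_near (Nat.one_le_cast.2 h) (by linarith : (1 : ℝ) < 1 + ε)
    exact ⟨k + 1, by simpa [InClass] using hk⟩

theorem InClass.apply_le_mul (hε : 0 ≤ 1 + ε) (hs : InClass ε g k s) (ht : InClass ε g k t) :
    (g t : ℝ) ≤ (1 + ε) * g s := by
  unfold InClass at hs ht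
  split_ifs at hs ht with hk
  · simp [hs, ht]
  · calc (g t : ℝ) ≤ (1 + ε) ^ k := ht.2.le
      _ = (1 + ε) * (1 + ε) ^ (k - 1) := by rw [← pow_succ']; congr 1; omega
      _ ≤ (1 + ε) * g s := mul_le_mul_of_nonneg_left hs.1 hε

theorem exists_mem_leftEnds_le {T m : ℕ} (hm : m ∈ Icc 1 T) (hk : InClass ε g k m) :
    ∃ t ∈ leftEnds T ε g, t ≤ m ∧ InClass ε g k t := by
  have hmC : m ∈ (Icc 1 T).filter (InClass ε g k) := mem_filter.2 ⟨hm, hk⟩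
  obtain ⟨htI, htk⟩ := mem_filter.1 (min'_mem _ ⟨m, hmC⟩)
  refine ⟨_, mem_filter.2 ⟨htI, k, htk, fun s hs hsk => ?_⟩, min'_le _ _ hmC, htk⟩
  exact min'_le _ _ (mem_filter.2 ⟨hs, hsk⟩)

end Classes

section Endpoints

variable {n T : ℕ} {ε : ℝ} {f : Fin n → ℕ → ℕ} {t : ℕ}

theorem one_mem_That : 1 ∈ That T ε f := by
  simp [That]

theorem mem_Icc_of_mem_leftEnds {g : ℕ → ℕ} (ht : t ∈ leftEnds T ε g) : t ∈ Icc 1 T :=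
  (mem_filter.1 ht).1

theorem one_le_of_mem_That (ht : t ∈ That T ε f) : 1 ≤ t := by
  rcases mem_union.1 ht with h | h
  · obtain ⟨j, -, hj⟩ := mem_biUnion.1 h
    exact (mem_Icc.1 (mem_Icc_of_mem_leftEnds hj)).1
  · simp_all

theorem le_of_mem_That (hT : 1 ≤ T) (ht : t ∈ That T ε f) : t ≤ T := by
  rcases mem_union.1 ht with h | h
  · obtain ⟨j, -, hj⟩ := mem_biUnion.1 h
    exact (mem_Icc.1 (mem_Icc_of_mem_leftEnds hj)).2
  · simp_all

theorem exists_mem_That_le_mul (hε : 0 < ε) (j : Fin n) {m : ℕ} (hm : m ∈ Icc 1 T) :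
    ∃ t ∈ That T ε f, t ≤ m ∧ (f j m : ℝ) ≤ (1 + ε) * f j t := by
  obtain ⟨k, hk⟩ := exists_inClass hε (f j) m
  obtain ⟨t, ht, htm, htk⟩ := exists_mem_leftEnds_le hm hk
  exact ⟨t, mem_union_left _ (mem_biUnion.2 ⟨j, mem_univ j, ht⟩), htm,
    htk.apply_le_mul (by linarith) hk⟩

end Endpoints

theorem fround_prevPt_le {n T : ℕ} {ε : ℝ} (hε : 0 < ε) {f : Fin n → ℕ → ℕ} {j : Fin n}
    (hfmono : ∀ s t : ℕ, s ≤ t → t ≤ T → f j s ≤ f j t) {u : ℕ} (hu : u ∈ Icc 1 T) :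
    (fround T ε f j (prevPt (That T ε f) u) : ℝ) ≤ (1 + ε) * f j u := by
  obtain ⟨hu1, huT⟩ := mem_Icc.1 hu
  set S := That T ε f
  set t := prevPt S u
  set N := ((S.filter fun s => t < s).min.untopD (T + 1))
  have hN_le : ∀ s ∈ S, t < s → N ≤ s := fun s hs hts =>
    untopD_min_le_of_mem _ (mem_filter.2 ⟨hs, hts⟩)
  have hN : (N ∈ S ∧ t < N) ∨ N = T + 1 := by
    simpa only [mem_filter] using untopD_min_mem_or_eq (S.filter fun s => t < s) (T + 1)
  have huN : u < N := by
    rcases hN with ⟨hNS, htN⟩ | hN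
    · exact lt_of_not_ge fun hNu => (le_prevPt hNS hNu).not_gt htN
    · omega
  have hNT : N ≤ T + 1 := by
    rcases hN with ⟨hNS, -⟩ | hN
    · exact (le_of_mem_That (hu1.trans huT) hNS).trans T.le_succ
    · exact hN.le
  obtain ⟨t₀, ht₀S, ht₀m, hcost⟩ :=
    exists_mem_That_le_mul (f := f) hε j (show N - 1 ∈ Icc 1 T by simp only [mem_Icc]; omega)
  have ht₀t : t₀ ≤ t := by
    by_contra! htt₀
    have := hN_le t₀ ht₀S htt₀
    omega
  calc (fround T ε f j t : ℝ) = f j (N - 1) := rfl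
    _ ≤ (1 + ε) * f j t₀ := hcost
    _ ≤ (1 + ε) * f j u := by
      gcongr
      exact hfmono _ _ (ht₀t.trans (prevPt_le S u)) huT

theorem stmt_12_general {n : ℕ} (ε : ℝ) (hε : 0 < ε)
    (p : Fin n → ℕ)
    (T : ℕ)
    (f : Fin n → ℕ → ℕ)
    (hfmono : ∀ j, ∀ s t : ℕ, s ≤ t → t ≤ T → f j s ≤ f j t)
    (x : Fin n → ℕ → ℕ)
    (hxa : ∀ j, ∑ t ∈ Icc 1 T, x j t = 1)
    (hxc : ∀ t ∈ Icc 1 T, T + 1 - t ≤ ∑ j, ∑ s ∈ Icc t T, p j * x j s) :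
    ∃ x' : Fin n → ℕ → ℕ,
      (∀ j t, x' j t = 0 ∨ x' j t = 1) ∧
      (∀ j, ∑ t ∈ That T ε f, x' j t = 1) ∧
      (∀ t ∈ That T ε f,
        T + 1 - t ≤ ∑ j, ∑ s ∈ (That T ε f).filter (fun s => t ≤ s), p j * x' j s) ∧
      (∑ j, ∑ t ∈ That T ε f, (fround T ε f j t : ℝ) * (x' j t : ℝ)) ≤
        (1 + ε) * ∑ j, ∑ t ∈ Icc 1 T, (f j t : ℝ) * (x j t : ℝ) := by
  set S := That T ε f
  have hφ : ∀ u ∈ Icc 1 T, prevPt S u ∈ S := fun u hu =>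
    prevPt_mem one_mem_That (mem_Icc.1 hu).1
  refine ⟨fun j => pushAlong (Icc 1 T) (prevPt S) (x j), fun j t => ?_, fun j => ?_,
    fun t ht => ?_, ?_⟩
  · exact Nat.le_one_iff_eq_zero_or_eq_one.1 ((pushAlong_le_sum _ t).trans (hxa j).le)
  · exact (sum_pushAlong hφ _).trans (hxa j)
  · by_cases htT : t ≤ T
    · have hIcc : (Icc 1 T).filter (fun u => t ≤ prevPt S u) = Icc t T := by
        ext u
        simp only [mem_filter, mem_Icc, le_prevPt_iff ht]
        have := one_le_of_mem_That ht
        omega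
      refine (hxc t (mem_Icc.2 ⟨one_le_of_mem_That ht, htT⟩)).trans_eq
        (sum_congr rfl fun j _ => ?_)
      rw [← hIcc]
      exact (sum_filter_mul_pushAlong hφ (t ≤ ·) (p j) (x j)).symm
    · omega
  · simp_rw [Nat.cast_pushAlong, sum_mul_pushAlong hφ, mul_sum]
    refine sum_le_sum fun j _ => sum_le_sum fun u hu => ?_
    rw [← mul_assoc]
    exact mul_le_mul_of_nonneg_right (fround_prevPt_le hε (hfmono j) hu) (Nat.cast_nonneg _)

/-- If there is a feasible solution `x` to (IP) with objective value
`v = ∑_{j,t} f_j(t) x_{jt}`, then there is a feasible solution `x'` to (IP') with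
objective value `∑_{j∈𝒥} ∑_{t∈𝒯̂} f'_j(t) x'_{jt}` at most `(1+ε)·v`.
(Here `D(t) = T − t + 1`, written as the truncated subtraction `T + 1 - t`.) -/
theorem stmt_12 {n : ℕ} (ε : ℝ) (hε : 0 < ε)
    (p : Fin n → ℕ) (hp : ∀ j, 0 < p j)
    (T : ℕ) (hT : T = ∑ j, p j)
    (f : Fin n → ℕ → ℕ) (hf0 : ∀ j, f j 0 = 0)
    (hfmono : ∀ j, ∀ s t : ℕ, s ≤ t → t ≤ T → f j s ≤ f j t)
    (x : Fin n → ℕ → ℕ)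
    (hx01 : ∀ j t, x j t = 0 ∨ x j t = 1)
    (hxa : ∀ j, ∑ t ∈ Icc 1 T, x j t = 1)
    (hxc : ∀ t ∈ Icc 1 T, T + 1 - t ≤ ∑ j, ∑ s ∈ Icc t T, p j * x j s) :
    ∃ x' : Fin n → ℕ → ℕ,
      (∀ j t, x' j t = 0 ∨ x' j t = 1) ∧
      (∀ j, ∑ t ∈ That T ε f, x' j t = 1) ∧
      (∀ t ∈ That T ε f,
        T + 1 - t ≤ ∑ j, ∑ s ∈ (That T ε f).filter (fun s => t ≤ s), p j * x' j s) ∧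
      (∑ j, ∑ t ∈ That T ε f, (fround T ε f j t : ℝ) * (x' j t : ℝ)) ≤
        (1 + ε) * ∑ j, ∑ t ∈ Icc 1 T, (f j t : ℝ) * (x j t : ℝ) :=
  stmt_12_general ε hε p T f hfmono x hxa hxc
end

section
/- A due-date assignment σ is preemptively feasible if and only if there is no residual demand on any interval: D(r, t, σ) = 0 for every release date r ∈ H and every t ∈ 𝒯. Moreover, when this condition holds, the preemptive Earliest Due Date rule (in each unit time slot, process a released, unfinished job with the smallest due date) completes every job by its due date. -/
open Finset

/-- The residual demand of the interval `[a, t)` with respect to the due-date assignment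
`σ`:  `D(a, t, σ) = max { a + ∑_{j : a ≤ r_j ≤ σ_j < t} p_j − t + 1, 0 }` (written via
truncated natural subtraction). -/
def residR {n : ℕ} (p r : Fin n → ℕ) (σ : Fin n → ℕ) (a t : ℕ) : ℕ :=
  (a + ∑ j ∈ univ.filter (fun j => a ≤ r j ∧ r j ≤ σ j ∧ σ j < t), p j + 1) - t

/-- `σ` is preemptively feasible: there is an assignment of the unit time slots
`(u−1, u]` to jobs (at most one job per slot) such that each job `j` receives exactly
`p j` slots, all contained in `(r j, σ j]`. -/
def PreemptFeasible {n : ℕ} (p r : Fin n → ℕ) (σ : Fin n → ℕ) : Prop :=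
  ∃ S : Fin n → Finset ℕ,
    (∀ i j, i ≠ j → Disjoint (S i) (S j)) ∧
    ∀ j, (S j).card = p j ∧ S j ⊆ Icc (r j + 1) (σ j)

/-- The number of slots among `(0,1], …, (u−1,u]` in which the schedule
`s : ℕ → Option (Fin n)` processes job `j`. -/
def doneBy {n : ℕ} (s : ℕ → Option (Fin n)) (j : Fin n) (u : ℕ) : ℕ :=
  ((Icc 1 u).filter fun v => s v = some j).card

/-- `s : ℕ → Option (Fin n)` is a preemptive Earliest Due Date schedule (for due dates
`σ`): in each unit time slot `(u−1, u]`, `u ∈ {1,…,T}`, it processes a released,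
unfinished job with the smallest due date (and is only idle if no released job is
unfinished). -/
def IsEDD {n : ℕ} (p r : Fin n → ℕ) (σ : Fin n → ℕ) (T : ℕ)
    (s : ℕ → Option (Fin n)) : Prop :=
  (∀ u ∈ Icc 1 T, ∀ j, s u = some j → r j < u ∧ doneBy s j (u - 1) < p j) ∧
  (∀ u ∈ Icc 1 T, ∀ j, s u = some j →
    ∀ i, r i < u → doneBy s i (u - 1) < p i → σ j ≤ σ i) ∧
  (∀ u ∈ Icc 1 T, s u = none → ∀ i, r i < u → p i ≤ doneBy s i (u - 1))


section EddAux
open Finset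
variable {n : ℕ}

lemma doneBy_congr {s s' : ℕ → Option (Fin n)} {j : Fin n} {u : ℕ}
    (h : ∀ v ∈ Icc 1 u, s v = s' v) : doneBy s j u = doneBy s' j u := by
  unfold doneBy
  congr 1
  exact filter_congr (fun v hv => by rw [h v hv])

lemma doneBy_mono (s : ℕ → Option (Fin n)) (j : Fin n) {u v : ℕ} (h : u ≤ v) :
    doneBy s j u ≤ doneBy s j v :=
  card_le_card (filter_subset_filter _ (Icc_subset_Icc_right h))

lemma doneBy_zero (s : ℕ → Option (Fin n)) (j : Fin n) : doneBy s j 0 = 0 := by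
  simp [doneBy]

lemma doneBy_succ (s : ℕ → Option (Fin n)) (j : Fin n) (u : ℕ) :
    doneBy s j (u + 1) = doneBy s j u + if s (u + 1) = some j then 1 else 0 := by
  unfold doneBy
  rw [← Finset.insert_Icc_right_eq_Icc_add_one (by omega : 1 ≤ u + 1), filter_insert]
  split
  · rw [card_insert_of_notMem (by simp)]
  · simp

lemma doneBy_le {p r σ : Fin n → ℕ} {T : ℕ} {s : ℕ → Option (Fin n)}
    (hs : IsEDD p r σ T s) (j : Fin n) : ∀ u, u ≤ T → doneBy s j u ≤ p j := by
  intro u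
  induction u with
  | zero => intro _; simp [doneBy_zero]
  | succ m ih =>
    intro hm
    rw [doneBy_succ]
    split
    · rename_i h
      have := (hs.1 (m+1) (by simp; omega) j h).2
      simp only [Nat.add_sub_cancel] at this
      omega
    · have := ih (by omega); omega

open Classical in
/-- pick a released unfinished job with minimal due date, if any -/
noncomputable def pick (p r σ : Fin n → ℕ) (f : ℕ → Option (Fin n)) (u : ℕ) :
    Option (Fin n) :=
  if h : (univ.filter fun i => r i < u ∧ doneBy f i (u-1) < p i).Nonempty
  then some (Finset.exists_min_image _ σ h).choose
  else none

lemma pick_some {p r σ : Fin n → ℕ} {f : ℕ → Option (Fin n)} {u : ℕ} {j : Fin n}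
    (h : pick p r σ f u = some j) :
    (r j < u ∧ doneBy f j (u-1) < p j) ∧
      ∀ i, r i < u → doneBy f i (u-1) < p i → σ j ≤ σ i := by
  classical
  unfold pick at h
  split at h
  · rename_i hne
    obtain ⟨hmem, hmin⟩ := (Finset.exists_min_image _ σ hne).choose_spec
    cases h
    exact ⟨(mem_filter.mp hmem).2,
      fun i h1 h2 => hmin i (mem_filter.mpr ⟨mem_univ i, h1, h2⟩)⟩
  · simp at h

lemma pick_none {p r σ : Fin n → ℕ} {f : ℕ → Option (Fin n)} {u : ℕ}
    (h : pick p r σ f u = none) :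
    ∀ i, r i < u → p i ≤ doneBy f i (u-1) := by
  classical
  unfold pick at h
  split at h
  · simp at h
  · rename_i hne
    rw [Finset.not_nonempty_iff_eq_empty, Finset.filter_eq_empty_iff] at hne
    intro i hi
    have := hne (mem_univ i)
    push_neg at this
    exact this hi

noncomputable def sch (p r σ : Fin n → ℕ) : ℕ → ℕ → Option (Fin n)
  | 0 => fun _ => none
  | (u+1) => fun v => if v = u + 1 then pick p r σ (sch p r σ u) (u+1) else sch p r σ u v

lemma sch_stable (p r σ : Fin n → ℕ) :
    ∀ w u, u ≤ w → ∀ v ≤ u, sch p r σ w v = sch p r σ u v := by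
  intro w
  induction w with
  | zero =>
    intro u hu v hv
    have : u = 0 := by omega
    subst this; rfl
  | succ m ih =>
    intro u hu v hv
    rcases Nat.lt_or_ge u (m+1) with h1 | h1
    · simp only [sch]
      rw [if_neg (by omega : ¬ v = m + 1)]
      exact ih u (by omega) v hv
    · have : u = m + 1 := by omega
      subst this; rfl

noncomputable def eddSched (p r σ : Fin n → ℕ) : ℕ → Option (Fin n) :=
  fun v => sch p r σ v v

lemma eddSched_eq (p r σ : Fin n → ℕ) {u v : ℕ} (h : v ≤ u) :
    eddSched p r σ v = sch p r σ u v := by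
  rw [eddSched, sch_stable p r σ u v h v le_rfl]

lemma eddSched_succ (p r σ : Fin n → ℕ) (m : ℕ) :
    eddSched p r σ (m+1) = pick p r σ (sch p r σ m) (m+1) := by
  simp only [eddSched, sch, if_pos]

lemma doneBy_eddSched (p r σ : Fin n → ℕ) (j : Fin n) (m : ℕ) :
    doneBy (eddSched p r σ) j m = doneBy (sch p r σ m) j m :=
  doneBy_congr (fun v hv => eddSched_eq p r σ (mem_Icc.mp hv).2)

lemma eddSched_isEDD (p r σ : Fin n → ℕ) (T : ℕ) : IsEDD p r σ T (eddSched p r σ) := by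
  refine ⟨?_, ?_, ?_⟩
  · intro u hu j hj
    obtain ⟨m, rfl⟩ : ∃ m, u = m + 1 := ⟨u - 1, by simp at hu; omega⟩
    rw [eddSched_succ] at hj
    have := (pick_some hj).1
    simp only [Nat.add_sub_cancel] at this ⊢
    rwa [doneBy_eddSched]
  · intro u hu j hj i hri hdi
    obtain ⟨m, rfl⟩ : ∃ m, u = m + 1 := ⟨u - 1, by simp at hu; omega⟩
    rw [eddSched_succ] at hj
    simp only [Nat.add_sub_cancel] at hdi ⊢
    rw [doneBy_eddSched] at hdi
    exact (pick_some hj).2 i hri (by simpa using hdi)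
  · intro u hu hnone i hri
    obtain ⟨m, rfl⟩ : ∃ m, u = m + 1 := ⟨u - 1, by simp at hu; omega⟩
    rw [eddSched_succ] at hnone
    simp only [Nat.add_sub_cancel]
    rw [doneBy_eddSched]
    exact pick_none hnone i hri |>.trans_eq (by simp)


lemma edd_completes (p r : Fin n → ℕ) (hp : ∀ j, 0 < p j)
    (T : ℕ) (hT : T = univ.sup r + ∑ j, p j)
    (σ : Fin n → ℕ) (hσT : ∀ j, σ j ∈ Icc 1 T) (hσr : ∀ j, r j ≤ σ j)
    (hres : ∀ a ∈ univ.image r, ∀ t ∈ Icc 1 T, a < t → residR p r σ a t = 0)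
    (s : ℕ → Option (Fin n)) (hs : IsEDD p r σ T s) :
    ∀ j, doneBy s j (σ j) = p j := by
  classical
  -- extended residual bound up to T + 1
  have hres' : ∀ a ∈ univ.image r, ∀ t, a < t → t ≤ T + 1 →
      a + ∑ j ∈ univ.filter (fun j => a ≤ r j ∧ r j ≤ σ j ∧ σ j < t), p j + 1 ≤ t := by
    intro a ha t hat htT
    rcases Nat.lt_or_ge t (T + 1) with h1 | h1
    · have := hres a ha t (by simp; omega) hat
      rw [residR] at this
      omega
    · have ht : t = T + 1 := by omega
      subst ht
      obtain ⟨i₀, _, hi₀⟩ := mem_image.mp ha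
      have h2 : a ≤ univ.sup r := hi₀ ▸ le_sup (mem_univ i₀)
      have h3 : ∑ j ∈ univ.filter (fun j => a ≤ r j ∧ r j ≤ σ j ∧ σ j < T + 1), p j
          ≤ ∑ j, p j := sum_le_sum_of_subset (filter_subset _ _)
      omega
  intro j
  by_contra hne
  have hdT : σ j ≤ T := (mem_Icc.mp (hσT j)).2
  have hd1 : 1 ≤ σ j := (mem_Icc.mp (hσT j)).1
  have hlt : doneBy s j (σ j) < p j :=
    lt_of_le_of_ne (doneBy_le hs j (σ j) hdT) hne
  set d := σ j with hd
  -- last "bad" slot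
  set F : Finset ℕ := (Icc 1 d).filter
    (fun u => s u = none ∨ ∃ k, s u = some k ∧ σ j < σ k) with hF
  obtain ⟨a, had, hwin, hrel⟩ :
      ∃ a, a ≤ d ∧
        (∀ u, a < u → u ≤ d → ∃ k, s u = some k ∧ σ k ≤ σ j) ∧
        (∀ i, σ i ≤ σ j → doneBy s i (a - 1) < p i → a ≤ r i) := by
    by_cases hFne : F.Nonempty
    · refine ⟨F.max' hFne, ?_, ?_, ?_⟩
      · exact (mem_Icc.mp (mem_filter.mp (F.max'_mem hFne)).1).2
      · intro u hau hud
        have hu1 : 1 ≤ u :=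
          le_trans (mem_Icc.mp (mem_filter.mp (F.max'_mem hFne)).1).1 (le_of_lt hau)
        have hnot : u ∉ F := fun hu => absurd (F.le_max' u hu) (by omega)
        rw [hF, mem_filter] at hnot
        push_neg at hnot
        have := hnot (mem_Icc.mpr ⟨hu1, hud⟩)
        rcases h : s u with _ | k
        · exact absurd h this.1
        · exact ⟨k, rfl, this.2 k h⟩
      · intro i hσi hdi
        set a := F.max' hFne with haa
        have haF := mem_filter.mp (F.max'_mem hFne)
        have haIcc := mem_Icc.mp haF.1
        by_contra hria
        push_neg at hria
        rcases haF.2 with hnone | ⟨k, hk, hσk⟩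
        · have := hs.2.2 a (by simp; omega) hnone i hria
          omega
        · have := hs.2.1 a (by simp; omega) k hk i hria hdi
          omega
    · refine ⟨0, by omega, ?_, fun i _ _ => Nat.zero_le _⟩
      intro u hu hud
      have hnot : u ∉ F := fun h => hFne ⟨u, h⟩
      rw [hF, mem_filter] at hnot
      push_neg at hnot
      have := hnot (mem_Icc.mpr ⟨by omega, hud⟩)
      rcases h : s u with _ | k
      · exact absurd h this.1
      · exact ⟨k, rfl, this.2 k h⟩
  -- the demanding job set
  set A : Finset (Fin n) := univ.filter (fun i => a ≤ r i ∧ r i ≤ σ i ∧ σ i ≤ σ j)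
    with hA
  have hjA : j ∈ A := by
    rw [hA, mem_filter]
    exact ⟨mem_univ j, hrel j le_rfl
      (lt_of_le_of_lt (doneBy_mono s j (by omega : a - 1 ≤ d)) hlt),
      hσr j, le_rfl⟩
  have hAne : A.Nonempty := ⟨j, hjA⟩
  -- the minimal release date over A
  set a' := A.inf' hAne r with ha'
  obtain ⟨i₀, hi₀A, hi₀⟩ := A.exists_mem_eq_inf' hAne r
  have ha'a : a ≤ a' := le_inf' hAne r (fun i hi => (mem_filter.mp hi).2.1)
  have ha'j : a' ≤ r j := inf'_le r hjA
  -- residual demand condition applied to [a', d + 1)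
  have hkey := hres' a' (mem_image.mpr ⟨i₀, mem_univ i₀, hi₀.symm⟩) (d + 1)
    (by have := hσr j; omega) (by omega)
  have hAsub : A ⊆ univ.filter (fun i => a' ≤ r i ∧ r i ≤ σ i ∧ σ i < d + 1) := by
    intro i hi
    rw [mem_filter] at hi ⊢
    exact ⟨hi.1, inf'_le r (mem_filter.mpr hi), hi.2.2.1, by omega⟩
  have hsumA : ∑ i ∈ A, p i ≤ d - a' := by
    have := sum_le_sum_of_subset (f := p) hAsub
    omega
  -- counting: the slots in (a, d] exactly serve the jobs of A
  have hcount : ∑ i ∈ A, doneBy s i d = d - a := by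
    have hfil : ∀ i ∈ A, (Icc 1 d).filter (fun v => s v = some i)
        = (Ioc a d).filter (fun v => s v = some i) := by
      intro i hi
      apply Finset.ext
      intro u
      simp only [mem_filter, mem_Icc, mem_Ioc]
      constructor
      · rintro ⟨⟨h1, h2⟩, h3⟩
        refine ⟨⟨?_, h2⟩, h3⟩
        have hru := (hs.1 u (by simp; omega) i h3).1
        have := (mem_filter.mp hi).2.1
        omega
      · rintro ⟨⟨h1, h2⟩, h3⟩
        exact ⟨⟨by omega, h2⟩, h3⟩
    calc ∑ i ∈ A, doneBy s i d
        = ∑ i ∈ A, ((Ioc a d).filter (fun v => s v = some i)).card := by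
          apply sum_congr rfl
          intro i hi
          rw [doneBy, hfil i hi]
      _ = (A.biUnion (fun i => (Ioc a d).filter (fun v => s v = some i))).card := by
          rw [card_biUnion]
          intro x hx y hy hxy
          simp only [disjoint_left, mem_filter]
          rintro u ⟨_, hux⟩ ⟨_, huy⟩
          rw [hux] at huy
          exact hxy (Option.some.inj huy)
      _ = (Ioc a d).card := by
          congr 1
          apply Finset.Subset.antisymm
          · exact biUnion_subset.mpr (fun i _ => filter_subset _ _)
          · intro u hu
            rw [mem_Ioc] at hu
            obtain ⟨k, hk, hσk⟩ := hwin u hu.1 hu.2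
            have hdk : doneBy s k (u - 1) < p k :=
              (hs.1 u (by simp; omega) k hk).2
            have hkA : k ∈ A := by
              rw [hA, mem_filter]
              refine ⟨mem_univ k, hrel k hσk ?_, hσr k, hσk⟩
              exact lt_of_le_of_lt (doneBy_mono s k (by omega : a - 1 ≤ u - 1)) hdk
            exact mem_biUnion.mpr ⟨k, hkA, mem_filter.mpr ⟨mem_Ioc.mpr hu, hk⟩⟩
      _ = d - a := Nat.card_Ioc a d
  -- the contradiction
  have hstrict : ∑ i ∈ A, doneBy s i d < ∑ i ∈ A, p i :=
    sum_lt_sum (fun i _ => doneBy_le hs i d hdT) ⟨j, hjA, hlt⟩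
  omega


end EddAux

/-- A due-date assignment `σ` is preemptively feasible if and only if
there is no residual demand on any interval: `D(a, t, σ) = 0` for every release date
`a ∈ H = {r_j : j ∈ 𝒥}` and every `t ∈ 𝒯` (with `a < t`, so that `[a, t)` is an
interval).  Moreover, when this condition holds, any preemptive Earliest Due Date
schedule (in each unit time slot, process a released, unfinished job with the smallest
due date) completes every job by its due date. -/
theorem stmt_15 {n : ℕ} (p r : Fin n → ℕ) (hp : ∀ j, 0 < p j)
    (T : ℕ) (hT : T = univ.sup r + ∑ j, p j)
    (σ : Fin n → ℕ) (hσT : ∀ j, σ j ∈ Icc 1 T) (hσr : ∀ j, r j ≤ σ j) :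
    (PreemptFeasible p r σ ↔
      ∀ a ∈ univ.image r, ∀ t ∈ Icc 1 T, a < t → residR p r σ a t = 0) ∧
    ((∀ a ∈ univ.image r, ∀ t ∈ Icc 1 T, a < t → residR p r σ a t = 0) →
      ∀ s : ℕ → Option (Fin n), IsEDD p r σ T s →
        ∀ j, doneBy s j (σ j) = p j) := by
  classical
  have hpart2 := edd_completes p r hp T hT σ hσT hσr
  constructor
  · constructor
    · -- feasibility implies zero residual demand
      rintro ⟨S, hdisj, hS⟩ a ha t ht hat
      rw [residR, Nat.sub_eq_zero_iff_le]
      have ht1 : 1 ≤ t := (mem_Icc.mp ht).1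
      have hsum : ∑ i ∈ univ.filter (fun i => a ≤ r i ∧ r i ≤ σ i ∧ σ i < t), p i
          ≤ t - 1 - a := by
        set B := univ.filter (fun i => a ≤ r i ∧ r i ≤ σ i ∧ σ i < t) with hB
        calc ∑ i ∈ B, p i = ∑ i ∈ B, (S i).card :=
              sum_congr rfl (fun i _ => ((hS i).1).symm)
          _ = (B.biUnion S).card :=
              (card_biUnion (fun x _ y _ hxy => hdisj x y hxy)).symm
          _ ≤ (Icc (a + 1) (t - 1)).card := by
              apply card_le_card
              apply biUnion_subset.mpr
              intro i hi
              rw [hB, mem_filter] at hi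
              refine (hS i).2.trans (Icc_subset_Icc (by omega) (by omega))
          _ = t - 1 - a := by rw [Nat.card_Icc]; omega
      omega
    · -- zero residual demand implies feasibility, via the EDD schedule
      intro hres
      set s := eddSched p r σ with hsdef
      have hEDD : IsEDD p r σ T s := eddSched_isEDD p r σ T
      have hdone := hpart2 hres s hEDD
      refine ⟨fun j => (Icc 1 (σ j)).filter (fun u => s u = some j), ?_, ?_⟩
      · intro i j hij
        simp only [disjoint_left, mem_filter]
        rintro u ⟨_, hui⟩ ⟨_, huj⟩
        rw [hui] at huj
        exact hij (Option.some.inj huj)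
      · intro j
        refine ⟨hdone j, ?_⟩
        intro u hu
        rw [mem_filter, mem_Icc] at hu
        rw [mem_Icc]
        have hσjT : σ j ≤ T := (mem_Icc.mp (hσT j)).2
        have := (hEDD.1 u (mem_Icc.mpr ⟨hu.1.1, le_trans hu.1.2 hσjT⟩) j hu.2).1
        omega
  · exact hpart2
end

section
/- Let σ and ρ be due-date assignments (with σ_j ≥ r_j and ρ_j ≥ r_j for all j), and suppose ρ is preemptively feasible. Then for every release date r* ∈ H and every t* ∈ 𝒯: ∑_{i ∈ 𝒥 : r* ≤ r_i and σ_i < t* ≤ ρ_i} min{p_i, D(r*, t*, σ)} ≥ D(r*, t*, σ). -/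
open Finset

/-- Let `σ` and `ρ` be due-date assignments (with `σ_j, ρ_j ≥ r_j`),
and suppose `ρ` is preemptively feasible.  Then for every release date `r* ∈ H` and every
`t* ∈ 𝒯` (with `r* < t*`, so that `[r*, t*)` is an interval):
`∑_{i : r* ≤ r_i, σ_i < t* ≤ ρ_i} min {p_i, D(r*, t*, σ)} ≥ D(r*, t*, σ)`. -/
theorem stmt_16 {n : ℕ} (p r : Fin n → ℕ) (hp : ∀ j, 0 < p j)
    (T : ℕ) (hT : T = univ.sup r + ∑ j, p j)
    (σ ρ : Fin n → ℕ)
    (hσT : ∀ j, σ j ∈ Icc 1 T) (hσr : ∀ j, r j ≤ σ j)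
    (hρT : ∀ j, ρ j ∈ Icc 1 T) (hρr : ∀ j, r j ≤ ρ j)
    (hρ : PreemptFeasible p r ρ) :
    ∀ rstar ∈ univ.image r, ∀ tstar ∈ Icc 1 T, rstar < tstar →
      residR p r σ rstar tstar ≤
        ∑ i ∈ univ.filter (fun i => rstar ≤ r i ∧ σ i < tstar ∧ tstar ≤ ρ i),
          min (p i) (residR p r σ rstar tstar) := by
  obtain ⟨S, hdisj, hS⟩ := hρ
  intro a ha t ht hat
  set D := residR p r σ a t with hD
  set F := univ.filter (fun i => a ≤ r i ∧ σ i < t ∧ t ≤ ρ i) with hF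
  by_cases hcase : ∃ i ∈ F, D ≤ p i
  · obtain ⟨i, hi, hpi⟩ := hcase
    calc D = min (p i) D := (min_eq_right hpi).symm
      _ ≤ ∑ i ∈ F, min (p i) D :=
        Finset.single_le_sum (f := fun i => min (p i) D) (fun j _ => Nat.zero_le _) hi
  · push_neg at hcase
    have hsum : ∑ i ∈ F, min (p i) D = ∑ i ∈ F, p i :=
      Finset.sum_congr rfl fun i hi => min_eq_left (le_of_lt (hcase i hi))
    rw [hsum]
    -- slot counting for jobs finishing (w.r.t. ρ) before t
    set A1 := univ.filter (fun j : Fin n => a ≤ r j ∧ ρ j < t) with hA1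
    have hcount : ∑ j ∈ A1, p j + a + 1 ≤ t := by
      have hsub : A1.biUnion S ⊆ Icc (a + 1) (t - 1) := by
        intro x hx
        simp only [Finset.mem_biUnion] at hx
        obtain ⟨j, hj, hxj⟩ := hx
        simp only [hA1, Finset.mem_filter] at hj
        have hx2 := (hS j).2 hxj
        simp only [Finset.mem_Icc] at hx2 ⊢
        omega
      have h1 : ∑ j ∈ A1, p j = (A1.biUnion S).card := by
        rw [Finset.card_biUnion (fun i _ j _ hij => hdisj i j hij)]
        exact Finset.sum_congr rfl fun j _ => ((hS j).1).symm
      have h2 := Finset.card_le_card hsub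
      rw [Nat.card_Icc] at h2
      omega
    -- split A into ρ < t and t ≤ ρ parts
    set A := univ.filter (fun j : Fin n => a ≤ r j ∧ r j ≤ σ j ∧ σ j < t) with hA
    have hsplit := Finset.sum_filter_add_sum_filter_not A (fun j => t ≤ ρ j) p
    have h3 : ∑ j ∈ A.filter (fun j => t ≤ ρ j), p j ≤ ∑ j ∈ F, p j := by
      apply Finset.sum_le_sum_of_subset
      intro x hx
      simp only [hA, hF, Finset.mem_filter, Finset.mem_univ, true_and] at hx ⊢
      tauto
    have h4 : ∑ j ∈ A.filter (fun j => ¬ t ≤ ρ j), p j ≤ ∑ j ∈ A1, p j := by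
      apply Finset.sum_le_sum_of_subset
      intro x hx
      simp only [hA, hA1, Finset.mem_filter, Finset.mem_univ, true_and] at hx ⊢
      omega
    have hDval : D = a + ∑ j ∈ A, p j + 1 - t := rfl
    omega
end
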